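/- Let A be a finite set and T an object of T⁺(A). If a simplex τ of NP(A) is a face of a layering of T, then there exists a morphism φ(τ) → T in T⁺(A). Conversely, if σ is a simplex of NP(A) such that there exists a morphism φ(σ) → T in T⁺(A), then σ is a face of a layering of T. -/

import Mathlib

open CategoryTheory Opposite

noncomputable section

/-- A map in `TopCat` is a homotopy equivalence. -/
def TopCat.IsHomotopyEquivMap {X Y : TopCat} (f : X ⟶ Y) : Prop :=
  ∃ g : Y ⟶ X, ContinuousMap.Homotopic (f ≫ g).hom (TopCat.Hom.hom (𝟙 X)) ∧ ContinuousMap.Homotopic (g ≫ f).hom (TopCat.Hom.hom (𝟙 Y))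

/-- A map of simplicial sets is a weak homotopy equivalence; since geometric realizations
are CW complexes, this is (by Whitehead's theorem) equivalent to the geometric
realization being a homotopy equivalence, which is how we phrase it. -/
def SSet.IsWeakHomotopyEquiv {X Y : SSet.{0}} (f : X ⟶ Y) : Prop :=
  TopCat.IsHomotopyEquivMap (SSet.toTop.map f)

/-- A simplicial set is weakly contractible iff its geometric realization (a CW complex)
is contractible. -/
def SSet.WeaklyContractible (X : SSet.{0}) : Prop :=
  ContractibleSpace (SSet.toTop.obj X)

/-- A functor is homotopy initial if for every object `c` of the target, the comma
category `φ/c` has weakly contractible nerve (classifying space). -/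
def CategoryTheory.Functor.HomotopyInitial {D : Type} [Category.{0} D] {C : Type}
    [Category.{0} C] (φ : D ⥤ C) : Prop :=
  ∀ c : C, SSet.WeaklyContractible (nerve (CostructuredArrow φ c))
/-- The poset of partitions of `A` (as setoids) strictly finer than the
indiscrete partition `⊤` and strictly coarser than the discrete partition `⊥`,
ordered by refinement (the coarser partition being the smaller one). -/
def PartitionPoset (A : Type) : Type := { r : Setoid A // r ≠ ⊥ ∧ r ≠ ⊤ }

instance (A : Type) : PartialOrder (PartitionPoset A) :=
  PartialOrder.lift (fun P => OrderDual.toDual P.1)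
    (fun _ _ h => Subtype.ext (OrderDual.toDual.injective h))

/-- The partition complex of `A`: the nerve of the poset of nontrivial partitions. -/
abbrev partitionComplex (A : Type) : SSet.{0} := nerve (PartitionPoset A)

/-- The blocks of a partition. -/
def PartitionPoset.blocks {A : Type} (P : PartitionPoset A) : Set (Set A) := P.1.classes

theorem PartitionPoset.le_iff {A : Type} {P Q : PartitionPoset A} :
    P ≤ Q ↔ Q.1 ≤ P.1 := Iff.rfl

/-- A finite rooted tree with set of leaves `A` and no unary vertices, encoded by its
set of edges, each edge being recorded as the set of leaves lying above it: this family
of sets contains `A` itself (the root edge) and all singletons (the leaf edges), and is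
laminar (any two members are nested or disjoint). Vertices correspond to the
non-singleton members, and automatically have at least two incoming edges. -/
structure TreeOn (A : Type) : Type where
  edges : Set (Set A)
  univ_mem : Set.univ ∈ edges
  singleton_mem : ∀ a : A, {a} ∈ edges
  nonempty_of_mem : ∀ e ∈ edges, e.Nonempty
  laminar : ∀ e ∈ edges, ∀ f ∈ edges, e ⊆ f ∨ f ⊆ e ∨ e ∩ f = ∅

namespace TreeOn

variable {A : Type}

@[ext] theorem ext {S T : TreeOn A} (h : S.edges = T.edges) : S = T := by
  cases S; cases T; congr

/-- `S ≤ T` iff `S` is obtained from `T` by contracting a set of inner edges. -/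
instance : PartialOrder (TreeOn A) where
  le S T := S.edges ⊆ T.edges
  le_refl S := subset_rfl
  le_trans S T U h h' := Set.Subset.trans h h'
  le_antisymm S T h h' := ext (Set.Subset.antisymm h h')

/-- An inner edge: an edge which is neither the root edge nor a leaf. -/
def IsInnerEdge (T : TreeOn A) (e : Set A) : Prop :=
  e ∈ T.edges ∧ e ≠ Set.univ ∧ ∀ a : A, e ≠ {a}

/-- The vertices of a tree: they correspond to the non-singleton edges (each such edge
has a vertex on top of it). -/
def vertices (T : TreeOn A) : Set (Set A) := { e ∈ T.edges | ∀ a : A, e ≠ {a} }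

/-- A leaf vertex: a vertex all of whose incoming edges are leaves, i.e. a non-singleton
edge all of whose proper subedges are singletons. -/
def IsLeafVertex (T : TreeOn A) (e : Set A) : Prop :=
  e ∈ T.vertices ∧ ∀ f ∈ T.edges, f ⊆ e → f ≠ e → ∃ a : A, f = {a}

/-- The corolla: the tree with no inner edges. -/
def corolla (A : Type) [Nonempty A] : TreeOn A where
  edges := {Set.univ} ∪ { s | ∃ a : A, s = {a} }
  univ_mem := Or.inl rfl
  singleton_mem a := Or.inr ⟨a, rfl⟩
  nonempty_of_mem e he := by
    rcases he with h | ⟨a, rfl⟩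
    · simp only [Set.mem_singleton_iff] at h; subst h; exact Set.univ_nonempty
    · exact ⟨a, rfl⟩
  laminar e he f hf := by
    rcases hf with h | ⟨a, rfl⟩
    · simp only [Set.mem_singleton_iff] at h; subst h; exact Or.inl (Set.subset_univ e)
    · by_cases ha : a ∈ e
      · exact Or.inr (Or.inl (by simpa using ha))
      · exact Or.inr (Or.inr (by ext x; simp; rintro hx rfl; exact ha hx))

end TreeOn

/-- The category `T⁺(A)` of trees with leaf set `A` having at least one inner edge;
it is a poset under the contraction order. -/
def TreePlus (A : Type) : Type := { T : TreeOn A // ∃ e, T.IsInnerEdge e }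

instance (A : Type) : PartialOrder (TreePlus A) := Subtype.partialOrder _
section ChainTree

variable {A : Type}

theorem Setoid.exists_of_ne_bot {r : Setoid A} (h : r ≠ ⊥) :
    ∃ x y : A, x ≠ y ∧ r x y := by
  by_contra hc
  push_neg at hc
  refine h (Setoid.ext fun a b => ?_)
  constructor
  · intro hr
    by_contra hne
    exact hc a b hne hr
  · rintro rfl
    exact r.refl' a

theorem Setoid.class_subset_or_disjoint {r s : Setoid A} (h : r ≤ s) {c d : Set A}
    (hc : c ∈ r.classes) (hd : d ∈ s.classes) : c ⊆ d ∨ c ∩ d = ∅ := by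
  obtain ⟨y, rfl⟩ := hc
  obtain ⟨z, rfl⟩ := hd
  by_cases hints : ({ x | r x y } ∩ { x | s x z } : Set A) = ∅
  · exact Or.inr hints
  · left
    obtain ⟨x, hxr, hxs⟩ := Set.nonempty_iff_ne_empty.2 hints
    intro w hw
    have hwx : r w x := r.trans' hw (r.symm' hxr)
    exact s.trans' (h hwx) hxs

/-- The underlying tree of a layered tree, i.e. of a chain of partitions: the functor
`φ` forgetting the layers and deleting unary vertices. Its edges are the root edge, the
leaf edges and the blocks of the partitions in the chain. -/
def chainTree {n : ℕ} (F : ComposableArrows (PartitionPoset A) n) : TreeOn A where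
  edges := {Set.univ} ∪ { s | ∃ a : A, s = {a} } ∪ ⋃ i, (F.obj i).blocks
  univ_mem := Or.inl (Or.inl rfl)
  singleton_mem a := Or.inl (Or.inr ⟨a, rfl⟩)
  nonempty_of_mem e he := by
    rcases he with (h | ⟨a, rfl⟩) | h
    · simp only [Set.mem_singleton_iff] at h
      subst h
      obtain ⟨x, y, -, -⟩ := Setoid.exists_of_ne_bot (F.obj 0).2.1
      exact ⟨x, trivial⟩
    · exact ⟨a, rfl⟩
    · simp only [Set.mem_iUnion] at h
      obtain ⟨i, hi⟩ := h
      obtain ⟨y, rfl⟩ := hi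
      exact ⟨y, (F.obj i).1.refl' y⟩
  laminar e he f hf := by
    have singcase : ∀ (g : Set A) (a : A), ({a} : Set A) ⊆ g ∨ g ⊆ {a} ∨ ({a} : Set A) ∩ g = ∅ := by
      intro g a
      by_cases hag : a ∈ g
      · exact Or.inl (by simpa using hag)
      · refine Or.inr (Or.inr ?_)
        ext x
        simp only [Set.mem_inter_iff, Set.mem_singleton_iff, Set.mem_empty_iff_false, iff_false,
          not_and]
        rintro rfl
        exact hag
    rcases he with (he | ⟨a, rfl⟩) | he
    · simp only [Set.mem_singleton_iff] at he
      subst he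
      exact Or.inr (Or.inl (Set.subset_univ f))
    · exact singcase f a
    · rcases hf with (hf | ⟨b, rfl⟩) | hf
      · simp only [Set.mem_singleton_iff] at hf
        subst hf
        exact Or.inl (Set.subset_univ e)
      · rcases singcase e b with h | h | h
        · exact Or.inr (Or.inl h)
        · exact Or.inl h
        · exact Or.inr (Or.inr (by rw [Set.inter_comm]; exact h))
      · simp only [Set.mem_iUnion] at he hf
        obtain ⟨i, hi⟩ := he
        obtain ⟨j, hj⟩ := hf
        rcases le_total i j with hij | hij
        · have hle : (F.obj j).1 ≤ (F.obj i).1 := leOfHom (F.map (homOfLE hij))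
          rcases Setoid.class_subset_or_disjoint hle hj hi with h | h
          · exact Or.inr (Or.inl h)
          · exact Or.inr (Or.inr (by rw [Set.inter_comm]; exact h))
        · have hle : (F.obj i).1 ≤ (F.obj j).1 := leOfHom (F.map (homOfLE hij))
          rcases Setoid.class_subset_or_disjoint hle hi hj with h | h
          · exact Or.inl h
          · exact Or.inr (Or.inr h)

/-- Any tree arising from a chain of nontrivial partitions has an inner edge. -/
theorem chainTree_exists_inner {n : ℕ} (F : ComposableArrows (PartitionPoset A) n) :
    ∃ e, (chainTree F).IsInnerEdge e := by
  obtain ⟨x, y, hxy, hr⟩ := Setoid.exists_of_ne_bot (F.obj 0).2.1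
  refine ⟨{ z | (F.obj 0).1 z y }, ?_, ?_, ?_⟩
  · exact Or.inr (Set.mem_iUnion.2 ⟨0, ⟨y, rfl⟩⟩)
  · intro h
    refine (F.obj 0).2.2 (Setoid.ext fun a b => ?_)
    have ha : (F.obj 0).1 a y := by rw [Set.eq_univ_iff_forall] at h; exact h a
    have hb : (F.obj 0).1 b y := by rw [Set.eq_univ_iff_forall] at h; exact h b
    simp only [Setoid.top_def]
    constructor
    · intro _; trivial
    · intro _; exact (F.obj 0).1.trans' ha ((F.obj 0).1.symm' hb)
  · intro a h
    have hx : x ∈ ({a} : Set A) := by rw [← h]; exact hr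
    have hy : y ∈ ({a} : Set A) := by rw [← h]; exact (F.obj 0).1.refl' y
    simp only [Set.mem_singleton_iff] at hx hy
    exact hxy (hx.trans hy.symm)

end ChainTree
/-- A simplicial subset (subcomplex) of a simplicial set: a family of sets of simplices
closed under the simplicial structure maps. -/
structure SSet.Subcomplex' (X : SSet.{0}) : Type 1 where
  carrier : ∀ n : SimplexCategoryᵒᵖ, Set (X.obj n)
  map_mem : ∀ {n m : SimplexCategoryᵒᵖ} (f : n ⟶ m) {x : X.obj n},
    x ∈ carrier n → X.map f x ∈ carrier m

/-- The simplicial set underlying a subcomplex. -/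
def SSet.Subcomplex'.toSSet {X : SSet.{0}} (S : X.Subcomplex') : SSet.{0} where
  obj n := { x : X.obj n // x ∈ S.carrier n }
  map f := TypeCat.ofHom fun x => ⟨X.map f x.1, S.map_mem f x.2⟩
  map_id n := by
    ext x
    simp
  map_comp f g := by
    ext x
    simp

/-- The blocks of the top (last) partition in a chain of partitions. -/
def topBlocks {A : Type} {n : ℕ} (F : ComposableArrows (PartitionPoset A) n) :
    Set (Set A) :=
  (F.obj (Fin.last n)).blocks

/-- A chain of partitions (i.e. a layered tree) is *elementary* if it has exactly one
non-unary vertex in each layer: passing from each partition in the chain to the next,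
exactly one block is subdivided, and the top partition has exactly one non-singleton
block (which is subdivided into leaves). -/
def IsElementary {A : Type} {n : ℕ} (F : ComposableArrows (PartitionPoset A) n) : Prop :=
  (∀ i : Fin n, ∃! b : Set A,
      b ∈ (F.obj i.castSucc).blocks ∧ b ∉ (F.obj i.succ).blocks) ∧
  (∃! b : Set A, b ∈ topBlocks F ∧ ∀ a : A, b ≠ {a})

/-- A simplex of the partition complex is a layering of the tree `T` if applying `φ`
(forgetting layers) to it yields exactly `T`. -/
def IsLayering {A : Type} {n : ℕ} (F : ComposableArrows (PartitionPoset A) n)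
    (T : TreeOn A) : Prop :=
  chainTree F = T

/-- The subcomplex `L(T)` of the partition complex generated by the elementary
layerings of the tree `T`. (For the corolla this is the empty subcomplex.) -/
def layeringSub (A : Type) (T : TreeOn A) : (partitionComplex A).Subcomplex' where
  carrier n := { σ | ∃ (m : SimplexCategory) (τ : (partitionComplex A).obj (op m))
      (g : n.unop ⟶ m), IsElementary τ ∧ IsLayering τ T ∧
      σ = (partitionComplex A).map g.op τ }
  map_mem {n m} f {x} hx := by
    obtain ⟨m', τ, g, he, hl, rfl⟩ := hx
    refine ⟨m', τ, f.unop ≫ g, he, hl, ?_⟩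
    rw [op_comp, (partitionComplex A).map_comp]
    rfl

/-- The subcomplex `Lᵛ(T)` of `L(T)` generated by the elementary layerings of `T`
having the leaf vertex `v` in the top layer. -/
def leafVertexSub (A : Type) (T : TreeOn A) (v : Set A) :
    (partitionComplex A).Subcomplex' where
  carrier n := { σ | ∃ (m : SimplexCategory) (τ : (partitionComplex A).obj (op m))
      (g : n.unop ⟶ m), IsElementary τ ∧ IsLayering τ T ∧ v ∈ topBlocks τ ∧
      σ = (partitionComplex A).map g.op τ }
  map_mem {n m} f {x} hx := by
    obtain ⟨m', τ, g, he, hl, hv, rfl⟩ := hx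
    refine ⟨m', τ, f.unop ≫ g, he, hl, hv, ?_⟩
    rw [op_comp, (partitionComplex A).map_comp]
    rfl
/-- The category of elements of a presheaf of sets: objects are pairs `(c, x)` with
`x ∈ X(c)`; morphisms `(c,x) ⟶ (c',x')` are morphisms `f : c ⟶ c'` of `C` with
`X(f)(x') = x`. -/
structure PElements {C : Type} [Category.{0} C] (X : Cᵒᵖ ⥤ Type) : Type where
  base : C
  elt : X.obj (op base)

instance PElements.category {C : Type} [Category.{0} C] (X : Cᵒᵖ ⥤ Type) :
    Category (PElements X) where
  Hom a b := { f : a.base ⟶ b.base // X.map f.op b.elt = a.elt }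
  id a := ⟨𝟙 a.base, by simp⟩
  comp {a b c} f g := ⟨f.1 ≫ g.1, by
    rw [op_comp, X.map_comp]; dsimp; rw [g.2, f.2]⟩
  id_comp f := by apply Subtype.ext; simp
  comp_id f := by apply Subtype.ext; simp
  assoc f g h := by apply Subtype.ext; simp

/-- The category of simplices `Δ/X` of a simplicial set `X`. -/
abbrev SSet.SimplexCat (X : SSet.{0}) : Type := PElements (C := SimplexCategory) X
/-- The functor `φ : Δ/NP(A) ⟶ T⁺(A)` sending a layered tree to its underlying tree,
forgetting the layers and deleting unary vertices. -/
def phiFunctor (A : Type) : SSet.SimplexCat (partitionComplex A) ⥤ TreePlus A where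
  obj σ := ⟨chainTree σ.elt, chainTree_exists_inner σ.elt⟩
  map {σ τ} f := homOfLE (by
    show chainTree σ.elt ≤ chainTree τ.elt
    intro e he
    rcases he with h | he
    · exact Or.inl h
    · simp only [Set.mem_iUnion] at he
      obtain ⟨i, hi⟩ := he
      rw [← f.2] at hi
      exact Or.inr (Set.mem_iUnion.2 ⟨_, hi⟩))
  map_id _ := Subsingleton.elim _ _
  map_comp _ _ := Subsingleton.elim _ _

/-! A morphism `φ(σ) ⟶ T` says that every block of every partition in the chain `σ` is an
edge of `T`; conversely a face of a layering only loses blocks. To complete such a chain to a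
layering of `T`, insert for each inner edge `e` of `T` a partition having `e` as a block. By
laminarity, each partition of the chain either has `e` inside one of its blocks or has `e` as a
union of blocks, and the latter partitions form a final segment of the chain. Merging `e` into a
single block of the first partition of that segment (of the discrete partition if the segment is
empty) gives a partition that fits between the two segments and whose blocks are still edges
of `T`. -/

namespace Fin

theorem monotone_insertNth {α : Type*} [Preorder α] {n : ℕ} {f : Fin n → α} (hf : Monotone f)
    {q : Fin (n + 1)} {x : α} (hlt : ∀ i, i.castSucc < q → f i ≤ x)
    (hge : ∀ i, q ≤ i.castSucc → x ≤ f i) : Monotone (q.insertNth x f) := by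
  intro a b hab
  cases a using succAboveCases q <;> cases b using succAboveCases q
  · simp
  · rename_i j
    simpa using hge j ((lt_succAbove_iff_le_castSucc q j).1 (hab.lt_of_ne (succAbove_ne q j).symm))
  · rename_i j
    simpa using hlt j ((succAbove_lt_iff_castSucc_lt q j).1 (hab.lt_of_ne (succAbove_ne q j)))
  · simpa using hf (succAbove_le_succAbove_iff.1 hab)

end Fin

namespace Setoid

variable {A : Type*}

def IsSaturated (r : Setoid A) (e : Set A) : Prop :=
  ∀ ⦃a b : A⦄, r a b → a ∈ e → b ∈ e

theorem IsSaturated.anti {r s : Setoid A} {e : Set A} (h : r.IsSaturated e) (hsr : s ≤ r) :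
    s.IsSaturated e :=
  fun _ _ hab ha => h (hsr hab) ha

def collapse (r : Setoid A) {e : Set A} (he : r.IsSaturated e) : Setoid A where
  r a b := r a b ∨ (a ∈ e ∧ b ∈ e)
  iseqv :=
    { refl a := Or.inl (r.refl' a)
      symm := by
        rintro a b (h | ⟨ha, hb⟩)
        exacts [Or.inl (r.symm' h), Or.inr ⟨hb, ha⟩]
      trans := by
        rintro a b c (h | ⟨ha, hb⟩) (h' | ⟨hb', hc⟩)
        · exact Or.inl (r.trans' h h')
        · exact Or.inr ⟨he (r.symm' h) hb', hc⟩
        · exact Or.inr ⟨ha, he h' hb⟩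
        · exact Or.inr ⟨ha, hc⟩ }

variable {r s : Setoid A} {e : Set A} (he : r.IsSaturated e)

theorem le_collapse : r ≤ r.collapse he := fun _ _ => Or.inl

theorem collapse_le (hrs : r ≤ s) (hes : ∀ a ∈ e, ∀ b ∈ e, s a b) : r.collapse he ≤ s := by
  rintro a b (h | ⟨ha, hb⟩)
  exacts [hrs h, hes a ha b hb]

theorem collapse_class_eq {y : A} (hy : y ∈ e) : {x | r.collapse he x y} = e :=
  Set.ext fun _ => ⟨fun h => h.elim (fun h => he (r.symm' h) hy) And.left, fun hx => Or.inr ⟨hx, hy⟩⟩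

theorem classes_collapse_subset : (r.collapse he).classes ⊆ insert e r.classes := by
  rintro _ ⟨y, rfl⟩
  by_cases hy : y ∈ e
  · exact Or.inl (collapse_class_eq he hy)
  · refine Or.inr ⟨y, Set.ext fun x => ⟨?_, Or.inl⟩⟩
    rintro (h | ⟨-, hy'⟩)
    exacts [h, absurd hy' hy]

theorem collapse_ne_bot (hne : e.Nontrivial) : r.collapse he ≠ ⊥ := by
  obtain ⟨x, hx, y, hy, hxy⟩ := hne
  intro h
  have hrel : r.collapse he x y := Or.inr ⟨hx, hy⟩
  rw [h, bot_def] at hrel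
  exact hxy hrel

theorem collapse_ne_top (hne : e.Nonempty) (hu : e ≠ Set.univ) : r.collapse he ≠ ⊤ := by
  obtain ⟨x, hx⟩ := hne
  obtain ⟨a, ha⟩ := (Set.ne_univ_iff_exists_notMem e).1 hu
  intro h
  have hrel : r.collapse he a x := by rw [h, top_def]; trivial
  rcases hrel with hax | ⟨hae, -⟩
  exacts [ha (he (r.symm' hax) hx), ha hae]

end Setoid

namespace TreeOn

variable {A : Type} {T : TreeOn A} {e : Set A}

theorem IsInnerEdge.nontrivial (he : T.IsInnerEdge e) : e.Nontrivial :=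
  (T.nonempty_of_mem e he.1).exists_eq_singleton_or_nontrivial.resolve_left
    fun ⟨a, ha⟩ => he.2.2 a ha

theorem isSaturated_or_subset_class {r : Setoid A} (hr : r.classes ⊆ T.edges)
    (he : e ∈ T.edges) : r.IsSaturated e ∨ ∀ a ∈ e, ∀ b ∈ e, r a b := by
  refine or_iff_not_imp_left.2 fun hns => ?_
  simp only [Setoid.IsSaturated, not_forall] at hns
  obtain ⟨a, b, hab, ha, hb⟩ := hns
  rcases T.laminar _ (hr ⟨a, rfl⟩) e he with hsub | hsub | hdisj
  · exact absurd (hsub (r.symm' hab)) hb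
  · exact fun x hx y hy => r.trans' (hsub hx) (r.symm' (hsub hy))
  · exact (Set.eq_empty_iff_forall_notMem.1 hdisj a ⟨r.refl' a, ha⟩).elim

theorem classes_bot_subset_edges : (⊥ : Setoid A).classes ⊆ T.edges := by
  rintro _ ⟨y, rfl⟩
  convert T.singleton_mem y using 1
  ext x
  simp

end TreeOn

namespace PartitionPoset

variable {A : Type} {T : TreeOn A} {N : ℕ} {c : Fin (N + 1) → PartitionPoset A} {e : Set A}

theorem exists_partition_with_block (hc : Monotone c) (hcT : ∀ i, (c i).blocks ⊆ T.edges)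
    (he : T.IsInnerEdge e) :
    ∃ (p : Fin (N + 2)) (R : PartitionPoset A), (∀ i, i.castSucc < p → c i ≤ R) ∧
      (∀ i, p ≤ i.castSucc → R ≤ c i) ∧ R.blocks ⊆ T.edges ∧ e ∈ R.blocks := by
  have hinside : ∀ i, ¬ (c i).1.IsSaturated e → ∀ a ∈ e, ∀ b ∈ e, (c i).1 a b :=
    fun i hi => (TreeOn.isSaturated_or_subset_class (hcT i) he.1).resolve_left hi
  suffices h : ∃ (Q : Setoid A) (p : Fin (N + 2)) (hQe : Q.IsSaturated e),
      Q.classes ⊆ T.edges ∧ (∀ i, i.castSucc < p → Q ≤ (c i).1 ∧ ¬ (c i).1.IsSaturated e) ∧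
      (∀ i, p ≤ i.castSucc → (c i).1 ≤ Q) by
    obtain ⟨Q, p, hQe, hQT, hlt, hge⟩ := h
    obtain ⟨x, hx⟩ := T.nonempty_of_mem e he.1
    refine ⟨p, ⟨Q.collapse hQe, Q.collapse_ne_bot hQe he.nontrivial,
      Q.collapse_ne_top hQe ⟨x, hx⟩ he.2.1⟩,
      fun i hi => Q.collapse_le hQe (hlt i hi).1 (hinside i (hlt i hi).2),
      fun i hi => (hge i hi).trans (Q.le_collapse hQe), fun b hb => ?_,
      ⟨x, (Q.collapse_class_eq hQe hx).symm⟩⟩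
    rcases Q.classes_collapse_subset hQe hb with rfl | hb
    exacts [he.1, hQT hb]
  have hupper : IsUpperSet {i | (c i).1.IsSaturated e} := fun i j hij hi => hi.anti (hc hij)
  rcases hupper.eq_empty_or_Ici with hI | ⟨a, hI⟩
  · refine ⟨⊥, Fin.last _, fun x y (hxy : x = y) hx => hxy ▸ hx,
      TreeOn.classes_bot_subset_edges, fun i _ => ⟨bot_le, fun hi => hI.subset hi⟩,
      fun i hi => absurd hi (Fin.castSucc_lt_last i).not_ge⟩
  · have hI' : ∀ i, (c i).1.IsSaturated e ↔ a ≤ i := fun i => Set.ext_iff.1 hI i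
    refine ⟨(c a).1, a.castSucc, (hI' a).2 le_rfl, hcT a, fun i hi => ?_, fun i hi => hc hi⟩
    have hia : i < a := Fin.castSucc_lt_castSucc_iff.1 hi
    exact ⟨hc hia.le, fun h => hia.not_ge ((hI' i).1 h)⟩

theorem exists_insert_block (hc : Monotone c) (hcT : ∀ i, (c i).blocks ⊆ T.edges)
    (he : T.IsInnerEdge e) :
    ∃ (c' : Fin (N + 2) → PartitionPoset A) (g : Fin (N + 1) → Fin (N + 2)),
      Monotone c' ∧ StrictMono g ∧ c' ∘ g = c ∧ (∀ i, (c' i).blocks ⊆ T.edges) ∧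
      ∃ i, e ∈ (c' i).blocks := by
  obtain ⟨p, R, hlt, hge, hRT, heR⟩ := exists_partition_with_block hc hcT he
  refine ⟨p.insertNth R c, p.succAbove, Fin.monotone_insertNth hc hlt hge,
    Fin.strictMono_succAbove p, funext fun i => by simp, fun i => ?_,
    p, by simpa using heR⟩
  cases i using Fin.succAboveCases p
  · simpa using hRT
  · simpa using hcT _

theorem exists_extension_covering (hc : Monotone c) (hcT : ∀ i, (c i).blocks ⊆ T.edges)
    (E : Finset (Set A)) (hE : ∀ e ∈ E, T.IsInnerEdge e) :
    ∃ (M : ℕ) (c' : Fin (M + 1) → PartitionPoset A) (g : Fin (N + 1) → Fin (M + 1)),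
      Monotone c' ∧ StrictMono g ∧ c' ∘ g = c ∧ (∀ i, (c' i).blocks ⊆ T.edges) ∧
      ∀ e ∈ E, ∃ i, e ∈ (c' i).blocks := by
  classical
  induction E using Finset.induction_on with
  | empty => exact ⟨N, c, id, hc, strictMono_id, rfl, hcT, by simp⟩
  | insert e E _ ih =>
    obtain ⟨M, c₁, g₁, hc₁, hg₁, hcg₁, hc₁T, hcov₁⟩ :=
      ih fun f hf => hE f (Finset.mem_insert_of_mem hf)
    obtain ⟨c₂, g₂, hc₂, hg₂, hcg₂, hc₂T, hcov₂⟩ :=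
      exists_insert_block hc₁ hc₁T (hE e (Finset.mem_insert_self e E))
    refine ⟨M + 1, c₂, g₂ ∘ g₁, hc₂, hg₂.comp hg₁, by rw [← Function.comp_assoc, hcg₂, hcg₁],
      hc₂T, (Finset.forall_mem_insert _ _ _).2 ⟨hcov₂, fun f hf => ?_⟩⟩
    obtain ⟨j, hj⟩ := hcov₁ f hf
    exact ⟨g₂ j, by rwa [← hcg₂] at hj⟩

end PartitionPoset

section ChainTree

variable {A : Type} {n : ℕ} {F : ComposableArrows (PartitionPoset A) n} {T : TreeOn A}

theorem chainTree_le_iff : chainTree F ≤ T ↔ ∀ i, (F.obj i).blocks ⊆ T.edges := by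
  refine ⟨fun h i b hb => h (Or.inr (Set.mem_iUnion.2 ⟨i, hb⟩)), fun h => ?_⟩
  rintro e ((rfl | ⟨a, rfl⟩) | he)
  · exact T.univ_mem
  · exact T.singleton_mem a
  · obtain ⟨i, hi⟩ := Set.mem_iUnion.1 he
    exact h i hi

theorem chainTree_eq_of_forall_isInnerEdge (hFT : ∀ i, (F.obj i).blocks ⊆ T.edges)
    (hcov : ∀ e, T.IsInnerEdge e → ∃ i, e ∈ (F.obj i).blocks) : chainTree F = T := by
  refine le_antisymm (chainTree_le_iff.2 hFT) fun e he => ?_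
  by_cases hu : e = Set.univ
  · exact Or.inl (Or.inl hu)
  by_cases hs : ∃ a, e = {a}
  · exact Or.inl (Or.inr hs)
  simp only [not_exists] at hs
  obtain ⟨i, hi⟩ := hcov e ⟨he, hu, hs⟩
  exact Or.inr (Set.mem_iUnion.2 ⟨i, hi⟩)

end ChainTree

/-- A simplex `σ` of the partition complex `NP(A)` is a face of a layering of the tree
`T` (i.e. the image of a simplex `τ` with `φ(τ) = T` under an injective simplicial
operator) if and only if there exists a morphism `φ(σ) ⟶ T` in `T⁺(A)`. -/
theorem face_of_layering_iff_hom (A : Type) [Fintype A] (T : TreePlus A)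
    (m : SimplexCategory) (σ : (partitionComplex A).obj (op m)) :
    (∃ (m' : SimplexCategory) (τ : (partitionComplex A).obj (op m')) (g : m ⟶ m'),
        Function.Injective g.toOrderHom ∧ IsLayering τ T.1 ∧
        σ = (partitionComplex A).map g.op τ) ↔
      Nonempty ((phiFunctor A).obj ⟨m, σ⟩ ⟶ T) := by
  constructor
  · rintro ⟨m', τ, g, -, hτ, rfl⟩
    exact ⟨(phiFunctor A).map (⟨g, rfl⟩ : (⟨m, _⟩ : SSet.SimplexCat _) ⟶ ⟨m', τ⟩) ≫
      eqToHom (Subtype.ext hτ)⟩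
  · rintro ⟨h⟩
    obtain ⟨M, c, g, hc, hg, hcg, hcT, hcov⟩ :=
      PartitionPoset.exists_extension_covering σ.monotone (chainTree_le_iff.1 (leOfHom h))
        (Set.toFinite {e | T.1.IsInnerEdge e}).toFinset (fun e he => by simpa using he)
    refine ⟨.mk M, hc.functor, .mk ⟨g, hg.monotone⟩, hg.injective,
      chainTree_eq_of_forall_isInnerEdge hcT fun e he => hcov e (by simpa using he), ?_⟩
    exact CategoryTheory.Functor.ext (fun i => (congrFun hcg i).symm) fun _ _ _ => Subsingleton.elim _ _

end
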